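/- Let γ₊ = (1+√5)/2 and γ₋ = (1−√5)/2. Let FS̃⁺ be the arrangement of ten lines in ℂℙ² defined by the vanishing of x, x − γ₊(y−z), y − z, x + y − z, x − z, x − γ₊y, y, x + y − (γ₊+1)z, z, and y − (1/γ₊ − 1)x − z, and let FS̃⁻ be defined by the same forms with γ₋ in place of γ₊. Then the complement of the union of the ten lines of FS̃⁺ in ℂℙ² is homeomorphic to the complement of the union of the ten lines of FS̃⁻; indeed the projective transformation of ℂℙ² induced by the invertible matrix A with rows (−γ₋, −1, 0), (−γ₋, 0, 0), (γ₋, 1, 1) (acting on row vectors) maps the union of the lines of FS̃⁺ onto the union of the lines of FS̃⁻ and restricts to such a homeomorphism. -/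

import Mathlib

/-- We work with the complex projective plane modeled on ℂ³:
points of ℂℙ² are 1-dimensional linear subspaces of ℂ³ and lines are
2-dimensional linear subspaces. -/
abbrev V3 := Fin 3 → ℂ

/-- A point of ℂℙ², viewed as a 1-dimensional subspace of ℂ³. -/
def IsPoint (p : Submodule ℂ V3) : Prop := Module.finrank ℂ p = 1

/-- A line of ℂℙ², viewed as a 2-dimensional subspace of ℂ³. -/
def IsLine (L : Submodule ℂ V3) : Prop := Module.finrank ℂ L = 2

/-- The multiplicity of a point `p` in the arrangement `A`:
the number of lines of `A` passing through `p`. -/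
noncomputable def mult (A : Finset (Submodule ℂ V3)) (p : Submodule ℂ V3) : ℕ :=
  {L | L ∈ A ∧ p ≤ L}.ncard

/-- `nPts A r` is the number `n_r` of points of multiplicity exactly `r` in `A`. -/
noncomputable def nPts (A : Finset (Submodule ℂ V3)) (r : ℕ) : ℕ :=
  {p | IsPoint p ∧ mult A p = r}.ncard

/-- The line of ℂℙ² (2-dimensional subspace of ℂ³) with equation a·x + b·y + c·z = 0,
i.e. the kernel of the linear form (x, y, z) ↦ a·x + b·y + c·z. -/
noncomputable def lineOf (a b c : ℂ) : Submodule ℂ V3 :=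
  LinearMap.ker
    (a • LinearMap.proj 0 + b • LinearMap.proj 1 + c • LinearMap.proj 2 : V3 →ₗ[ℂ] ℂ)

/-- γ₊ = (1+√5)/2 and γ₋ = (1−√5)/2, the two roots of x² − x − 1 = 0. -/
noncomputable def gammaP : ℂ := ((1 + Real.sqrt 5) / 2 : ℝ)

noncomputable def gammaM : ℂ := ((1 - Real.sqrt 5) / 2 : ℝ)

/-- The matrix A with rows (−γ₋, −1, 0), (−γ₋, 0, 0), (γ₋, 1, 1),
acting on row vectors v ∈ ℂ³ by v ↦ v·A. -/
noncomputable def Amat : Matrix (Fin 3) (Fin 3) ℂ :=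
  !![-gammaM, -1, 0; -gammaM, 0, 0; gammaM, 1, 1]
/-- The ten lines of the extended Falk–Sturmfels arrangement with parameter g
(g = γ₊ gives FS̃⁺, g = γ₋ gives FS̃⁻): the zero loci of x, x − g(y−z), y − z,
x + y − z, x − z, x − gy, y, x + y − (g+1)z, z, and y − (1/g − 1)x − z. -/
noncomputable def tFS (g : ℂ) : Fin 10 → Submodule ℂ V3 :=
  ![lineOf 1 0 0, lineOf 1 (-g) g, lineOf 0 1 (-1), lineOf 1 1 (-1), lineOf 1 0 (-1),
    lineOf 1 (-g) 0, lineOf 0 1 0, lineOf 1 1 (-(g + 1)), lineOf 0 0 1,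
    lineOf (-(1 / g - 1)) 1 (-1)]

/-- ℂℙ² with the quotient topology. -/
noncomputable instance : TopologicalSpace (Projectivization ℂ V3) :=
  instTopologicalSpaceQuotient

namespace FSAux

open Projectivization
open scoped LinearAlgebra.Projectivization

lemma gm_sq : gammaM * gammaM = gammaM + 1 := by
  have h5 : Real.sqrt 5 ^ 2 = 5 := Real.sq_sqrt (by norm_num)
  have h : ((1 - Real.sqrt 5)/2) * ((1 - Real.sqrt 5)/2) = (1 - Real.sqrt 5)/2 + 1 := by
    linear_combination h5 / 4
  unfold gammaM
  exact_mod_cast congrArg Complex.ofReal h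

lemma hPM : gammaP = 1 - gammaM := by
  unfold gammaP gammaM; push_cast; ring

lemma gm_ne : gammaM ≠ 0 := by
  intro h
  have := gm_sq
  rw [h] at this
  simp at this

lemma gpm : gammaP * gammaM = -1 := by
  rw [hPM]; linear_combination -gm_sq

lemma gp_ne : gammaP ≠ 0 := by
  intro h
  have := gpm
  rw [h] at this
  simp at this

lemma gm1_ne : gammaM + 1 ≠ 0 := by
  rw [← gm_sq]; exact mul_ne_zero gm_ne gm_ne

lemma invM : 1 / gammaM = gammaM - 1 := by
  rw [div_eq_iff gm_ne]; linear_combination -gm_sq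

lemma invP : 1 / gammaP = -gammaM := by
  rw [div_eq_iff gp_ne]; linear_combination gpm

lemma mem_lineOf {a b c : ℂ} {v : V3} :
    v ∈ lineOf a b c ↔ a * v 0 + b * v 1 + c * v 2 = 0 := by
  simp [lineOf, LinearMap.mem_ker]

lemma vecMulA (v : V3) {a b c : ℂ} :
    Matrix.vecMul v Amat ∈ lineOf a b c ↔
      (-gammaM * a - b) * v 0 + (-gammaM * a) * v 1 + (gammaM * a + b + c) * v 2 = 0 := by
  have h0 : Matrix.vecMul v Amat 0 = -gammaM * v 0 + -gammaM * v 1 + gammaM * v 2 := by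
    simp [Amat, Matrix.vecMul, dotProduct, Fin.sum_univ_three] <;> ring
  have h1 : Matrix.vecMul v Amat 1 = -v 0 + v 2 := by
    simp [Amat, Matrix.vecMul, dotProduct, Fin.sum_univ_three] <;> ring
  have h2 : Matrix.vecMul v Amat 2 = v 2 := by
    simp [Amat, Matrix.vecMul, dotProduct, Fin.sum_univ_three]
  rw [mem_lineOf, h0, h1, h2]
  constructor <;> intro h <;> linear_combination h

lemma zero_iff {x y c : ℂ} (hc : c ≠ 0) (h : x = c * y) : x = 0 ↔ y = 0 := by
  subst h; simp [hc]

/-- the permutation of indices -/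
def sig : Fin 10 → Fin 10 := ![3, 2, 0, 1, 7, 6, 4, 5, 8, 9]

lemma sig_surj : ∀ i : Fin 10, ∃ j, sig j = i := by decide

lemma memA (v : V3) (j : Fin 10) :
    Matrix.vecMul v Amat ∈ tFS gammaM j ↔ v ∈ tFS gammaP (sig j) := by
  fin_cases j
  · show _ ∈ lineOf 1 0 0 ↔ _ ∈ lineOf 1 1 (-1)
    rw [vecMulA, mem_lineOf]
    exact zero_iff (neg_ne_zero.mpr gm_ne) (by ring)
  · show _ ∈ lineOf 1 (-gammaM) gammaM ↔ _ ∈ lineOf 0 1 (-1)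
    rw [vecMulA, mem_lineOf]
    exact zero_iff (neg_ne_zero.mpr gm_ne) (by ring)
  · show _ ∈ lineOf 0 1 (-1) ↔ _ ∈ lineOf 1 0 0
    rw [vecMulA, mem_lineOf]
    exact zero_iff (c := (-1 : ℂ)) (by norm_num) (by ring)
  · show _ ∈ lineOf 1 1 (-1) ↔ _ ∈ lineOf 1 (-gammaP) gammaP
    rw [vecMulA, mem_lineOf]
    exact zero_iff (neg_ne_zero.mpr gm1_ne)
      (by rw [hPM]; linear_combination (v 1 - v 2) * gm_sq)
  · show _ ∈ lineOf 1 0 (-1) ↔ _ ∈ lineOf 1 1 (-(gammaP + 1))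
    rw [vecMulA, mem_lineOf]
    exact zero_iff (neg_ne_zero.mpr gm_ne)
      (by rw [hPM]; linear_combination (v 2) * gm_sq)
  · show _ ∈ lineOf 1 (-gammaM) 0 ↔ _ ∈ lineOf 0 1 0
    rw [vecMulA, mem_lineOf]
    exact zero_iff (neg_ne_zero.mpr gm_ne) (by ring)
  · show _ ∈ lineOf 0 1 0 ↔ _ ∈ lineOf 1 0 (-1)
    rw [vecMulA, mem_lineOf]
    exact zero_iff (c := (-1 : ℂ)) (by norm_num) (by ring)
  · show _ ∈ lineOf 1 1 (-(gammaM + 1)) ↔ _ ∈ lineOf 1 (-gammaP) 0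
    rw [vecMulA, mem_lineOf]
    exact zero_iff (neg_ne_zero.mpr gm1_ne)
      (by rw [hPM]; linear_combination (v 1) * gm_sq)
  · show _ ∈ lineOf 0 0 1 ↔ _ ∈ lineOf 0 0 1
    rw [vecMulA, mem_lineOf]
    exact zero_iff (c := (1 : ℂ)) one_ne_zero (by ring)
  · show _ ∈ lineOf (-(1 / gammaM - 1)) 1 (-1) ↔ _ ∈ lineOf (-(1 / gammaP - 1)) 1 (-1)
    rw [vecMulA, mem_lineOf]
    exact zero_iff gp_ne
      (by rw [invM, invP, hPM]; linear_combination (2 * v 0 + v 1 - v 2) * gm_sq)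

noncomputable def Bmat : Matrix (Fin 3) (Fin 3) ℂ :=
  !![0, -(1/gammaM), 0; -1, 1, 0; 1, 0, 1]

lemma vecMul_AB (v : V3) : Matrix.vecMul (Matrix.vecMul v Amat) Bmat = v := by
  funext i
  fin_cases i <;>
    simp [Amat, Bmat, Matrix.vecMul, dotProduct, Fin.sum_univ_three] <;>
    field_simp [gm_ne] <;> ring

lemma vecMul_BA (v : V3) : Matrix.vecMul (Matrix.vecMul v Bmat) Amat = v := by
  funext i
  fin_cases i <;>
    simp [Amat, Bmat, Matrix.vecMul, dotProduct, Fin.sum_univ_three] <;>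
    field_simp [gm_ne] <;> ring

lemma hA' : Function.Injective Amat.vecMulLinear := by
  intro v w h
  simp only [Matrix.vecMulLinear_apply] at h
  have h2 := congrArg (fun x => Matrix.vecMul x Bmat) h
  rwa [vecMul_AB, vecMul_AB] at h2

lemma hB' : Function.Injective Bmat.vecMulLinear := by
  intro v w h
  simp only [Matrix.vecMulLinear_apply] at h
  have h2 := congrArg (fun x => Matrix.vecMul x Amat) h
  rwa [vecMul_BA, vecMul_BA] at h2

lemma map_BA (p : ℙ ℂ V3) :
    Projectivization.map Bmat.vecMulLinear hB' (Projectivization.map Amat.vecMulLinear hA' p) = p := by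
  induction p using Projectivization.ind with
  | h v hv =>
    rw [Projectivization.map_mk, Projectivization.map_mk]
    exact (Projectivization.mk_eq_mk_iff ℂ _ _ _ hv).mpr
      ⟨1, by simp only [one_smul, Matrix.vecMulLinear_apply]; exact (vecMul_AB v).symm⟩

lemma map_AB (p : ℙ ℂ V3) :
    Projectivization.map Amat.vecMulLinear hA' (Projectivization.map Bmat.vecMulLinear hB' p) = p := by
  induction p using Projectivization.ind with
  | h v hv =>
    rw [Projectivization.map_mk, Projectivization.map_mk]
    exact (Projectivization.mk_eq_mk_iff ℂ _ _ _ hv).mpr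
      ⟨1, by simp only [one_smul, Matrix.vecMulLinear_apply]; exact (vecMul_BA v).symm⟩

noncomputable def E : ℙ ℂ V3 ≃ ℙ ℂ V3 where
  toFun := Projectivization.map Amat.vecMulLinear hA'
  invFun := Projectivization.map Bmat.vecMulLinear hB'
  left_inv := map_BA
  right_inv := map_AB

lemma cont_map (M : Matrix (Fin 3) (Fin 3) ℂ) (hM : Function.Injective M.vecMulLinear) :
    Continuous (Projectivization.map M.vecMulLinear hM) := by
  have hc : Continuous (M.vecMulLinear : V3 → V3) :=
    LinearMap.continuous_of_finiteDimensional _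
  unfold Projectivization.map
  exact Continuous.quotient_map' ((hc.comp continuous_subtype_val).subtype_mk _) _

lemma rep_mem_iff (S : Submodule ℂ V3) {v : V3} (hv : v ≠ 0) :
    (Projectivization.mk ℂ v hv).rep ∈ S ↔ v ∈ S := by
  obtain ⟨a, ha⟩ := Projectivization.exists_smul_eq_mk_rep ℂ v hv
  rw [← ha, Units.smul_def]
  exact S.smul_mem_iff (by exact_mod_cast a.ne_zero)

lemma mapped_rep (p : ℙ ℂ V3) (j : Fin 10) :
    (Projectivization.map Amat.vecMulLinear hA' p).rep ∈ tFS gammaM j ↔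
      p.rep ∈ tFS gammaP (sig j) := by
  induction p using Projectivization.ind with
  | h v hv =>
    rw [Projectivization.map_mk, rep_mem_iff, rep_mem_iff]
    simpa [Matrix.vecMulLinear_apply] using memA v j

lemma key_exists (p : ℙ ℂ V3) :
    (∃ j, (Projectivization.map Amat.vecMulLinear hA' p).rep ∈ tFS gammaM j) ↔
      ∃ i, p.rep ∈ tFS gammaP i := by
  constructor
  · rintro ⟨j, hj⟩
    exact ⟨sig j, (mapped_rep p j).mp hj⟩
  · rintro ⟨i, hi⟩
    obtain ⟨j, rfl⟩ := sig_surj i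
    exact ⟨j, (mapped_rep p j).mpr hi⟩

lemma key_forall (p : ℙ ℂ V3) :
    (∀ j, (Projectivization.map Amat.vecMulLinear hA' p).rep ∉ tFS gammaM j) ↔
      ∀ i, p.rep ∉ tFS gammaP i := by
  constructor
  · intro h i hi
    obtain ⟨j, rfl⟩ := sig_surj i
    exact h j ((mapped_rep p j).mpr hi)
  · intro h j hj
    exact h (sig j) ((mapped_rep p j).mp hj)

end FSAux

open FSAux Projectivization in
/-- the projective transformation of ℂℙ² induced by the invertible
matrix A maps the union of the ten lines of FS̃⁺ onto the union of the ten lines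
of FS̃⁻, and restricts to a homeomorphism between the complements M(FS̃⁺) and
M(FS̃⁻). -/
theorem extended_FS_complements_homeomorphic :
    ∃ hA : Function.Injective Amat.vecMulLinear,
      (Projectivization.map Amat.vecMulLinear hA) ''
          {p : Projectivization ℂ V3 | ∃ i, p.rep ∈ tFS gammaP i} =
        {p : Projectivization ℂ V3 | ∃ i, p.rep ∈ tFS gammaM i} ∧
      ∃ h : {p : Projectivization ℂ V3 | ∀ i, p.rep ∉ tFS gammaP i} ≃ₜ
            {p : Projectivization ℂ V3 | ∀ i, p.rep ∉ tFS gammaM i},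
        ∀ p, (h p : Projectivization ℂ V3) =
          Projectivization.map Amat.vecMulLinear hA p := by
  refine ⟨hA', ?_, ?_⟩
  · ext q
    simp only [Set.mem_image, Set.mem_setOf_eq]
    constructor
    · rintro ⟨p, hp, rfl⟩
      exact (key_exists p).mpr hp
    · intro hq
      refine ⟨Projectivization.map Bmat.vecMulLinear hB' q, ?_, map_AB q⟩
      have := key_exists (Projectivization.map Bmat.vecMulLinear hB' q)
      rw [map_AB q] at this
      exact this.mp hq
  · have hmA : ∀ x : {p : Projectivization ℂ V3 | ∀ i, p.rep ∉ tFS gammaP i},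
        Projectivization.map Amat.vecMulLinear hA' x.1 ∈
          {p : Projectivization ℂ V3 | ∀ i, p.rep ∉ tFS gammaM i} :=
      fun x => (key_forall x.1).mpr x.2
    have hmB : ∀ y : {p : Projectivization ℂ V3 | ∀ i, p.rep ∉ tFS gammaM i},
        Projectivization.map Bmat.vecMulLinear hB' y.1 ∈
          {p : Projectivization ℂ V3 | ∀ i, p.rep ∉ tFS gammaP i} := by
      intro y
      have := key_forall (Projectivization.map Bmat.vecMulLinear hB' y.1)
      rw [map_AB y.1] at this
      exact this.mp y.2
    exact ⟨{
      toFun := fun x => ⟨_, hmA x⟩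
      invFun := fun y => ⟨_, hmB y⟩
      left_inv := fun x => Subtype.ext (map_BA x.1)
      right_inv := fun y => Subtype.ext (map_AB y.1)
      continuous_toFun :=
        ((cont_map Amat hA').comp continuous_subtype_val).subtype_mk hmA
      continuous_invFun :=
        ((cont_map Bmat hB').comp continuous_subtype_val).subtype_mk hmB }, fun p => rfl⟩
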